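/- Let X be a finite metric space with min_{x≠y} d_X(x,y) ≥ 1 such that (X, sqrt(d_X)) is isometric to a subset of ℓ_2. Then for every D ≥ 1, the truncated space X^{≤D} (with metric min{d_X(x,y), D}) embeds into ℓ_2 with distortion at most sqrt(eD/(e-1)); moreover the embedding can be chosen 1-Lipschitz with all images of norm sqrt(D). -/

import Mathlib

set_option maxHeartbeats 1000000

open Real Finset

section AuxPSD
open Nat

private lemma gram_pow_nonneg {ι κ : Type*} [Fintype ι] [Fintype κ]
    (a : ι → κ → ℝ) (k : ℕ) :
    ∀ w : ι → ℝ, 0 ≤ ∑ x, ∑ y, w x * w y * (∑ j, a x j * a y j) ^ k := by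
  induction k with
  | zero =>
    intro w
    simp only [pow_zero, mul_one]
    rw [← Finset.sum_mul_sum]
    exact mul_self_nonneg _
  | succ k ih =>
    intro w
    have step : ∀ x y : ι, w x * w y * (∑ j, a x j * a y j) ^ (k + 1)
        = ∑ j, (w x * a x j) * (w y * a y j) * (∑ j', a x j' * a y j') ^ k := by
      intro x y
      rw [pow_succ]
      simp only [Finset.mul_sum]
      exact Finset.sum_congr rfl fun j _ => by ring
    have key : ∑ x, ∑ y, w x * w y * (∑ j, a x j * a y j) ^ (k + 1)
        = ∑ j, ∑ x, ∑ y, (w x * a x j) * (w y * a y j) * (∑ j', a x j' * a y j') ^ k := by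
      simp only [step]
      exact (Finset.sum_congr rfl fun x _ => Finset.sum_comm).trans Finset.sum_comm
    rw [key]
    exact Finset.sum_nonneg fun j _ => ih (fun x => w x * a x j)

private lemma exp_gram_nonneg {ι κ : Type*} [Fintype ι] [Fintype κ]
    (a : ι → κ → ℝ) (t : ℝ) (ht : 0 ≤ t) (w : ι → ℝ) :
    0 ≤ ∑ x, ∑ y, w x * w y * Real.exp (t * ∑ j, a x j * a y j) := by
  have hexp : ∀ s : ℝ, Real.exp s = ∑' n : ℕ, s ^ n / (n ! : ℝ) := by
    intro s
    rw [Real.exp_eq_exp_ℝ, NormedSpace.exp_eq_tsum_div]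
  have hsum : ∀ (c s : ℝ), Summable (fun n : ℕ => c * (s ^ n / (n ! : ℝ))) :=
    fun c s => (Real.summable_pow_div_factorial s).mul_left c
  have h2 : ∀ x y : ι, w x * w y * Real.exp (t * ∑ j, a x j * a y j)
      = ∑' n : ℕ, w x * w y * ((t * ∑ j, a x j * a y j) ^ n / (n ! : ℝ)) := by
    intro x y
    rw [hexp, ← tsum_mul_left]
  have key : ∑ x, ∑ y, w x * w y * Real.exp (t * ∑ j, a x j * a y j)
      = ∑' n : ℕ, ∑ x, ∑ y, w x * w y * ((t * ∑ j, a x j * a y j) ^ n / (n ! : ℝ)) := by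
    simp only [h2]
    refine (Finset.sum_congr rfl fun x _ => (Summable.tsum_finsetSum (fun y _ => hsum _ _)).symm).trans ?_
    exact (Summable.tsum_finsetSum (fun x _ => summable_sum (fun y _ => hsum _ _))).symm
  rw [key]
  refine tsum_nonneg fun n => ?_
  have h1 : ∑ x, ∑ y, w x * w y * ((t * ∑ j, a x j * a y j) ^ n / (n ! : ℝ))
      = (t ^ n / (n ! : ℝ)) * ∑ x, ∑ y, w x * w y * (∑ j, a x j * a y j) ^ n := by
    rw [Finset.mul_sum]
    refine Finset.sum_congr rfl fun x _ => ?_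
    rw [Finset.mul_sum]
    refine Finset.sum_congr rfl fun y _ => ?_
    rw [mul_pow]
    ring
  rw [h1]
  exact mul_nonneg (div_nonneg (pow_nonneg ht n) (by positivity)) (gram_pow_nonneg a n w)

end AuxPSD

private lemma gram_decomp {X : Type*} [Fintype X] [DecidableEq X] {m : ℕ}
    (a : X → EuclideanSpace ℝ (Fin m)) (D : ℝ) (hD : 0 < D) :
    ∃ M : Matrix X X ℝ, ∀ x y,
      D / 2 * (1 + Real.exp (-‖a x - a y‖ ^ 2 / D)) = ∑ i, M i x * M i y := by
  set c : X → ℝ := fun x => Real.exp (-‖a x‖ ^ 2 / D) with hc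
  set G : Matrix X X ℝ :=
    Matrix.of (fun x y => D / 2 * (1 + Real.exp (-‖a x - a y‖ ^ 2 / D))) with hGdef
  have hinner : ∀ x y : X, (inner ℝ (a x) (a y) : ℝ) = ∑ j, a x j * a y j := by
    intro x y
    simp [PiLp.inner_apply, RCLike.inner_apply, conj_trivial, mul_comm]
  have hexp' : ∀ x y : X, Real.exp (-‖a x - a y‖ ^ 2 / D)
      = c x * c y * Real.exp (2 / D * ∑ j, a x j * a y j) := by
    intro x y
    have hns : ‖a x - a y‖ ^ 2 = ‖a x‖ ^ 2 - 2 * (inner ℝ (a x) (a y) : ℝ) + ‖a y‖ ^ 2 :=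
      norm_sub_sq_real (a x) (a y)
    have harg : -‖a x - a y‖ ^ 2 / D
        = -‖a x‖ ^ 2 / D + (-‖a y‖ ^ 2 / D + 2 / D * ∑ j, a x j * a y j) := by
      rw [hns, ← hinner x y]; ring
    rw [harg, Real.exp_add, Real.exp_add, hc]
    ring
  have hherm : G.IsHermitian := by
    ext x y
    simp only [Matrix.conjTranspose_apply, Matrix.of_apply, star_trivial, hGdef]
    rw [norm_sub_rev]
  have hPSD : G.PosSemidef := by
    refine Matrix.PosSemidef.of_dotProduct_mulVec_nonneg hherm fun v => ?_
    have hdot : dotProduct (star v) (G.mulVec v) = ∑ x, ∑ y, v x * v y * G x y := by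
      simp only [dotProduct, Matrix.mulVec, Pi.star_apply, star_trivial]
      refine Finset.sum_congr rfl fun x _ => ?_
      rw [Finset.mul_sum]
      exact Finset.sum_congr rfl fun y _ => by ring
    rw [hdot]
    set E : X → X → ℝ := fun x y => Real.exp (2 / D * ∑ j, a x j * a y j) with hE
    have hsplit : ∑ x, ∑ y, v x * v y * G x y
        = D / 2 * ((∑ x, v x) * (∑ x, v x))
          + D / 2 * ∑ x, ∑ y, (v x * c x) * (v y * c y) * E x y := by
      have e1 : ∀ x y : X, v x * v y * G x y
          = D / 2 * (v x * v y) + D / 2 * ((v x * c x) * (v y * c y) * E x y) := by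
        intro x y
        simp only [hE]
        show v x * v y * (D / 2 * (1 + Real.exp (-‖a x - a y‖ ^ 2 / D))) = _
        rw [hexp' x y]
        ring
      rw [Finset.sum_mul_sum]
      simp only [Finset.mul_sum, ← Finset.sum_add_distrib]
      exact Finset.sum_congr rfl fun x _ => Finset.sum_congr rfl fun y _ => e1 x y
    rw [hsplit]
    have h2 : 0 ≤ ∑ x, ∑ y, (v x * c x) * (v y * c y) * E x y := by
      simp only [hE]
      exact exp_gram_nonneg (fun x j => a x j) (2 / D) (by positivity)
        (fun x => v x * c x)
    have h1 : (0:ℝ) ≤ D / 2 * ((∑ x, v x) * (∑ x, v x)) :=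
      mul_nonneg (by positivity) (mul_self_nonneg _)
    exact add_nonneg h1 (mul_nonneg (by positivity) h2)
  obtain ⟨B, hB⟩ : ∃ B : Matrix X X ℝ, G = B.conjTranspose * B := by
    open scoped MatrixOrder in exact CStarAlgebra.nonneg_iff_eq_star_mul_self.mp hPSD.nonneg
  refine ⟨B, fun x y => ?_⟩
  have : G x y = ∑ i, B i x * B i y := by
    rw [hB]
    simp [Matrix.mul_apply, Matrix.conjTranspose_apply]
  exact this

/-- Let `X` be a finite metric space with all distances at least 1 such that
`(X, √d)` embeds isometrically into `ℓ₂`.  Then for every `D ≥ 1` the truncated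
space `X^{≤D}` embeds into `ℓ₂` with distortion at most `√(eD/(e-1))`, via a
1-Lipschitz map whose values all have norm `√D`. -/
theorem truncated_snowflake_embedding {X : Type*} [MetricSpace X] [Fintype X]
    (hmin : ∀ x y : X, x ≠ y → 1 ≤ dist x y)
    (hsq : ∃ φ : X → lp (fun _ : ℕ => ℝ) 2,
      ∀ x y, ‖φ x - φ y‖ = Real.sqrt (dist x y))
    (D : ℝ) (hD : 1 ≤ D) :
    ∃ f : X → lp (fun _ : ℕ => ℝ) 2,
      (∀ x, ‖f x‖ = Real.sqrt D) ∧
      ∀ x y, ‖f x - f y‖ ≤ min (dist x y) D ∧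
        min (dist x y) D ≤
          Real.sqrt (Real.exp 1 * D / (Real.exp 1 - 1)) * ‖f x - f y‖ := by
  classical
  obtain ⟨φ, hφ⟩ := hsq
  have hD0 : (0:ℝ) < D := lt_of_lt_of_le one_pos hD
  -- Extract finite-dimensional coordinates for φ
  set S : Submodule ℝ (lp (fun _ : ℕ => ℝ) 2) := Submodule.span ℝ (Set.range φ) with hS
  haveI : FiniteDimensional ℝ S := FiniteDimensional.span_of_finite ℝ (Set.finite_range φ)
  set b := stdOrthonormalBasis ℝ S with hb
  set a : X → EuclideanSpace ℝ (Fin (Module.finrank ℝ S)) :=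
    fun x => b.repr ⟨φ x, Submodule.subset_span (Set.mem_range_self x)⟩ with ha
  have hdist : ∀ x y : X, dist x y = ‖a x - a y‖ ^ 2 := by
    intro x y
    have h1 : ‖a x - a y‖ = ‖φ x - φ y‖ := by
      rw [ha]
      simp only
      rw [← map_sub, LinearIsometryEquiv.norm_map]
      rfl
    rw [h1, hφ, Real.sq_sqrt dist_nonneg]
  obtain ⟨M, hM⟩ := gram_decomp a D hD0
  -- Build the embedding
  set e : X → ℕ := fun x => ((Fintype.equivFin X) x : ℕ) with he
  have he_inj : Function.Injective e := fun x y h =>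
    (Fintype.equivFin X).injective (Fin.val_injective h)
  set f : X → lp (fun _ : ℕ => ℝ) 2 :=
    fun x => ∑ i : X, lp.single 2 (e i) (M i x) with hf
  have hinner : ∀ x y : X, (inner ℝ (f x) (f y) : ℝ) = ∑ i, M i x * M i y := by
    intro x y
    rw [hf]
    simp only
    rw [sum_inner]
    refine Finset.sum_congr rfl fun i _ => ?_
    rw [lp.inner_single_left]
    have hcoe : (∑ j : X, lp.single 2 (e j) (M j y) : lp (fun _ : ℕ => ℝ) 2) (e i) = M i y := by
      have hc1 := congrFun
        (lp.coeFn_sum (E := fun _ : ℕ => ℝ)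
          (fun j : X => lp.single 2 (e j) (M j y)) Finset.univ) (e i)
      rw [hc1, Finset.sum_apply]
      rw [Finset.sum_eq_single i]
      · exact lp.single_apply_self (E := fun _ : ℕ => ℝ) 2 (e i) (M i y)
      · intro j _ hji
        exact lp.single_apply_ne (E := fun _ : ℕ => ℝ) 2 (e j) (M j y)
          (fun hh => hji (he_inj hh).symm)
      · intro hi; exact absurd (Finset.mem_univ i) hi
    rw [hcoe]
    simp [RCLike.inner_apply, conj_trivial, mul_comm]
  have hGram : ∀ x y : X, (inner ℝ (f x) (f y) : ℝ)
      = D / 2 * (1 + Real.exp (-dist x y / D)) := by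
    intro x y
    rw [hinner x y, ← hM x y, hdist x y]
  have hnorm : ∀ x : X, ‖f x‖ = Real.sqrt D := by
    intro x
    have h1 : ‖f x‖ ^ 2 = D := by
      rw [← real_inner_self_eq_norm_sq, hGram x x, dist_self]
      simp only [neg_zero, zero_div, Real.exp_zero]
      ring
    rw [← Real.sqrt_sq (norm_nonneg (f x)), h1]
  have hnormsub : ∀ x y : X, ‖f x - f y‖ ^ 2 = D * (1 - Real.exp (-dist x y / D)) := by
    intro x y
    rw [norm_sub_sq_real, hGram x y]
    have hx2 : ‖f x‖ ^ 2 = D := by rw [hnorm x, Real.sq_sqrt hD0.le]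
    have hy2 : ‖f y‖ ^ 2 = D := by rw [hnorm y, Real.sq_sqrt hD0.le]
    rw [hx2, hy2]
    ring
  clear_value f
  clear hf hinner hGram hM hdist he_inj he ha hb hS hφ
  refine ⟨f, hnorm, fun x y => ?_⟩
  have he1 : (1:ℝ) < Real.exp 1 := Real.one_lt_exp_iff.mpr one_pos
  have hC0 : (0:ℝ) ≤ Real.exp 1 * D / (Real.exp 1 - 1) :=
    div_nonneg (mul_nonneg (Real.exp_pos 1).le hD0.le) (by linarith)
  rcases eq_or_ne x y with rfl | hxy
  · constructor
    · simp [dist_self, min_eq_left hD0.le]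
    · simp [dist_self, min_eq_left hD0.le]
  · set d := dist x y with hdd
    have hd1 : 1 ≤ d := hmin x y hxy
    have hd0 : 0 < d := lt_of_lt_of_le one_pos hd1
    have hN2 : ‖f x - f y‖ ^ 2 = D * (1 - Real.exp (-d / D)) := hnormsub x y
    have hN0 : 0 ≤ ‖f x - f y‖ := norm_nonneg _
    set N := ‖f x - f y‖ with hNN
    have hmin0 : 0 ≤ min d D := le_min hd0.le hD0.le
    have hmin1 : 1 ≤ min d D := le_min hd1 hD
    constructor
    · -- upper bound
      have hub1 : N ^ 2 ≤ d := by
        have h5 : -d / D = -(d / D) := by ring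
        have h4 := Real.add_one_le_exp (-(d / D))
        have h3 : 1 - Real.exp (-d / D) ≤ d / D := by rw [h5]; linarith
        calc N ^ 2 = D * (1 - Real.exp (-d / D)) := hN2
          _ ≤ D * (d / D) := mul_le_mul_of_nonneg_left h3 hD0.le
          _ = d := by field_simp
      have hub2 : N ^ 2 ≤ D := by
        rw [hN2]
        nlinarith [Real.exp_pos (-d / D)]
      have h1 : N ^ 2 ≤ min d D := le_min hub1 hub2
      have h2 : N ^ 2 ≤ (min d D) ^ 2 := h1.trans (by nlinarith)
      calc N = Real.sqrt (N ^ 2) := (Real.sqrt_sq hN0).symm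
        _ ≤ Real.sqrt ((min d D) ^ 2) := Real.sqrt_le_sqrt h2
        _ = min d D := Real.sqrt_sq hmin0
    · -- lower bound
      have hexp1 : Real.exp (-1) * Real.exp 1 = 1 := by
        rw [← Real.exp_add]; simp
      have hkey : (min d D) ^ 2 ≤ Real.exp 1 * D / (Real.exp 1 - 1) * N ^ 2 := by
        rw [hN2]
        rw [div_mul_eq_mul_div, le_div_iff₀ (by linarith : (0:ℝ) < Real.exp 1 - 1)]
        rcases le_total d D with hdD | hDd
        · rw [min_eq_left hdD]
          set u := d / D with hu
          have hu0 : 0 ≤ u := by positivity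
          have hu1 : u ≤ 1 := (div_le_one hD0).mpr hdD
          have hconv : Real.exp (-u) ≤ 1 - u + u * Real.exp (-1) := by
            have h := convexOn_exp.2 (Set.mem_univ (0:ℝ)) (Set.mem_univ (-1:ℝ))
              (by linarith : (0:ℝ) ≤ 1 - u) hu0 (by ring)
            simp only [smul_eq_mul, mul_zero, zero_add, mul_neg_one, Real.exp_zero,
              mul_one] at h
            linarith
          have hlow : u * (1 - Real.exp (-1)) ≤ 1 - Real.exp (-u) := by nlinarith
          have h6 : -d / D = -u := by rw [hu]; ring
          have h7 : d = u * D := by rw [hu]; field_simp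
          rw [h6, h7]
          have hu_exp : u * (Real.exp (-1) * Real.exp 1) = u := by rw [hexp1, mul_one]
          have hstep : u * (Real.exp 1 - 1) ≤ Real.exp 1 * (1 - Real.exp (-u)) := by
            nlinarith [mul_le_mul_of_nonneg_left hconv (Real.exp_pos 1).le, hu_exp]
          nlinarith [mul_le_mul_of_nonneg_left hstep (by positivity : (0:ℝ) ≤ D * D),
            mul_nonneg (mul_nonneg hu0 (sub_nonneg.mpr hu1))
              (mul_nonneg (by positivity : (0:ℝ) ≤ D * D)
                (by linarith : (0:ℝ) ≤ Real.exp 1 - 1))]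
        · rw [min_eq_right hDd]
          have h8 : Real.exp (-d / D) ≤ Real.exp (-1) := by
            apply Real.exp_le_exp.mpr
            rw [neg_div]
            have : 1 ≤ d / D := (one_le_div hD0).mpr hDd
            linarith
          have hstep : Real.exp 1 - 1 ≤ Real.exp 1 * (1 - Real.exp (-d / D)) := by
            nlinarith [mul_le_mul_of_nonneg_left h8 (Real.exp_pos 1).le, hexp1]
          nlinarith [mul_le_mul_of_nonneg_left hstep (by positivity : (0:ℝ) ≤ D * D)]
      calc min d D = Real.sqrt ((min d D) ^ 2) := (Real.sqrt_sq hmin0).symm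
        _ ≤ Real.sqrt (Real.exp 1 * D / (Real.exp 1 - 1) * N ^ 2) :=
            Real.sqrt_le_sqrt hkey
        _ = Real.sqrt (Real.exp 1 * D / (Real.exp 1 - 1)) * N := by
            rw [Real.sqrt_mul hC0, Real.sqrt_sq hN0]
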